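/- For each (x,y) ∈ ℝ² there exists a unique pair (u,v) ∈ ℝ² satisfying v² + y² = (x² + u²)², vu + yx = 0, vx − yu ≥ 0. -/

import Mathlib

/-!
Put `z = x + i u` and `w = v + i y`. Then `w z = (v x - y u) + i (v u + y x)`, so the system says
that `w z` is real, nonnegative and of modulus `|z|³`, i.e. `w = |z| · z̄`:
`v = x |z|` and `y = -u |z|`. Hence `u` is the unique preimage of `-y` under the odd, strictly
increasing and continuous surjection `u ↦ u √(x² + u²)`, and `v` is then determined.
-/
open Filter Real

lemma strictMono_mul_sqrt_add_sq {c : ℝ} (hc : 0 ≤ c) :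
    StrictMono fun u : ℝ ↦ u * √(c + u ^ 2) := by
  refine strictMono_of_odd_strictMonoOn_nonneg (fun u ↦ by rw [neg_sq, neg_mul]) ?_
  intro a ha b _ hab
  have hb : 0 < b := ha.trans_lt hab
  calc a * √(c + a ^ 2) ≤ a * √(c + b ^ 2) := by gcongr
    _ < b * √(c + b ^ 2) := by gcongr

lemma tendsto_mul_sqrt_add_sq_atTop (c : ℝ) :
    Tendsto (fun u : ℝ ↦ u * √(c + u ^ 2)) atTop atTop :=
  tendsto_id.atTop_mul_atTop₀ <| tendsto_sqrt_atTop.comp <|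
    tendsto_atTop_add_const_left _ c (tendsto_pow_atTop two_ne_zero)

lemma surjective_mul_sqrt_add_sq (c : ℝ) :
    Function.Surjective fun u : ℝ ↦ u * √(c + u ^ 2) := by
  refine Continuous.surjective (by fun_prop) (tendsto_mul_sqrt_add_sq_atTop c) ?_
  have := tendsto_neg_atTop_atBot.comp <|
    (tendsto_mul_sqrt_add_sq_atTop c).comp tendsto_neg_atBot_atTop
  convert this using 2 with u
  simp [Function.comp]

lemma harvey_lawson_system_iff {x y u v : ℝ} :
    (v ^ 2 + y ^ 2 = (x ^ 2 + u ^ 2) ^ 2 ∧ v * u + y * x = 0 ∧ v * x - y * u ≥ 0) ↔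
      v = x * √(x ^ 2 + u ^ 2) ∧ y = -(u * √(x ^ 2 + u ^ 2)) := by
  set s := √(x ^ 2 + u ^ 2)
  have hs0 : 0 ≤ s := sqrt_nonneg _
  have hs : s ^ 2 = x ^ 2 + u ^ 2 := sq_sqrt (by positivity)
  constructor
  · rintro ⟨hmod, horth, hpos⟩
    -- Lagrange's identity `|w z|² = |w|² |z|²`
    have hcube : v * x - y * u = s ^ 3 := by
      refine (pow_left_inj₀ hpos (by positivity) two_ne_zero).1 ?_
      linear_combination (x ^ 2 + u ^ 2) * hmod - (v * u + y * x) * horth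
        - ((x ^ 2 + u ^ 2) ^ 2 + (x ^ 2 + u ^ 2) * s ^ 2 + s ^ 4) * hs
    -- `|w - |z| z̄|² = |w|² - 2 |z| Re (w z) + |z|⁴ = 0`
    have hsum : (v - x * s) ^ 2 + (y + u * s) ^ 2 = 0 := by
      linear_combination hmod - 2 * s * hcube - (x ^ 2 + u ^ 2 + 2 * s ^ 2) * hs
    obtain ⟨hv, hy⟩ := (add_eq_zero_iff_of_nonneg (sq_nonneg _) (sq_nonneg _)).1 hsum
    exact ⟨sub_eq_zero.1 (sq_eq_zero_iff.1 hv),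
      eq_neg_of_add_eq_zero_left (sq_eq_zero_iff.1 hy)⟩
  · rintro ⟨rfl, rfl⟩
    refine ⟨?_, by ring, ?_⟩
    · linear_combination (x ^ 2 + u ^ 2) * hs
    · have : x * s * x - -(u * s) * u = s * (x ^ 2 + u ^ 2) := by ring
      rw [this]; positivity

theorem harvey_lawson_graph (x y : ℝ) :
    ∃! p : ℝ × ℝ,
      p.2 ^ 2 + y ^ 2 = (x ^ 2 + p.1 ^ 2) ^ 2 ∧
      p.2 * p.1 + y * x = 0 ∧
      p.2 * x - y * p.1 ≥ 0 := by
  obtain ⟨u, hu⟩ := surjective_mul_sqrt_add_sq (x ^ 2) (-y)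
  refine ⟨(u, x * √(x ^ 2 + u ^ 2)), harvey_lawson_system_iff.2 ⟨rfl, by linarith⟩, ?_⟩
  rintro ⟨u', v'⟩ h
  obtain ⟨hv, hy⟩ := harvey_lawson_system_iff.1 h
  have hu' : u' = u :=
    (strictMono_mul_sqrt_add_sq (sq_nonneg x)).injective (by dsimp only at hy ⊢; linarith)
  exact Prod.ext hu' (by rw [hv, hu'])
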